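/- Let a > 0, n = 2, and W̃ an N×N matrix with nonnegative entries and positive diagonal entries. Let v ∈ (0,1)^N have pairwise distinct entries, and assume that for every index i ∈ {1,…,N} at least one of the following holds: (i) v_i ≠ 1/2, or (ii) there exists j ≠ i with v_j ≠ v_i, v_j ≠ 1 − v_i, and w̃_{ij} > 0. Then the Hessian matrix of the energy E(·,W̃) at v is positive definite. -/

import Mathlib

/-- Penaliser `Ψ̃_{a,n}(s) = a·((|s|−1)^(2n) − 1)`; here `n = 2`. -/
noncomputable def psi (a : ℝ) (n : ℕ) (s : ℝ) : ℝ := a * ((|s| - 1) ^ (2 * n) - 1)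

/-- Energy `E(v,W̃) = (1/2)·Σᵢ Σⱼ w̃ᵢⱼ·(Ψ̃(vⱼ−vᵢ) + Ψ̃(vⱼ+vᵢ))`. -/
noncomputable def energy {N : ℕ} (a : ℝ) (n : ℕ) (W : Matrix (Fin N) (Fin N) ℝ)
    (v : Fin N → ℝ) : ℝ :=
  (1 / 2) * ∑ i, ∑ j, W i j * (psi a n (v j - v i) + psi a n (v j + v i))

/-- Hessian matrix of the energy at `v`. -/
noncomputable def hessianE {N : ℕ} (a : ℝ) (n : ℕ) (W : Matrix (Fin N) (Fin N) ℝ)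
    (v : Fin N → ℝ) : Matrix (Fin N) (Fin N) ℝ :=
  fun i j => iteratedFDeriv ℝ 2 (energy a n W) v ![Pi.single i 1, Pi.single j 1]

/-!
Near `v` none of the arguments `v q - v p` (`p ≠ q`) and `v q + v p` of the penaliser vanishes,
so there every `|·|` in the energy is a fixed sign times its argument, and the energy agrees with
a smooth sum of ridge functions `g (ℓ u)`, where `g t = a ((t - 1) ^ (2n) - 1)` and `ℓ` is linear.
The Hessian quadratic form is therefore `(1/2) ∑ W p q (g''(|v q - v p|) (x q - x p)² +
g''(v q + v p) (x q + x p)²)`, and `g'' ≥ 0` vanishes only at `1`. A coordinate `i` with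
`x i ≠ 0` then contributes a positive term: `(2 x i)²` if `2 v i ≠ 1`, and otherwise the two terms
of the neighbour `j`, as `(x j - x i)² + (x j + x i)² = 2 (x i² + x j²)` and `|v j - v i| < 1`.
-/

open Filter Topology
open scoped Matrix

theorem iteratedFDeriv_two_comp_clm_apply {E : Type*} [NormedAddCommGroup E] [NormedSpace ℝ E]
    {g : ℝ → ℝ} (hg : ContDiff ℝ 2 g) (ℓ : E →L[ℝ] ℝ) (x y z : E) :
    iteratedFDeriv ℝ 2 (fun u => g (ℓ u)) x ![y, z] = ℓ y * ℓ z * iteratedDeriv 2 g (ℓ x) := by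
  rw [show (fun u => g (ℓ u)) = g ∘ ℓ from rfl, ℓ.iteratedFDeriv_comp_right hg x le_rfl,
    ContinuousMultilinearMap.compContinuousLinearMap_apply,
    iteratedFDeriv_apply_eq_iteratedDeriv_mul_prod]
  simp [Fin.prod_univ_two]

theorem dotProduct_mulVec_iteratedFDeriv_two {N : ℕ} (f : (Fin N → ℝ) → ℝ) (v x : Fin N → ℝ) :
    x ⬝ᵥ (fun i j => iteratedFDeriv ℝ 2 f v ![Pi.single i 1, Pi.single j 1]
      : Matrix (Fin N) (Fin N) ℝ) *ᵥ x = iteratedFDeriv ℝ 2 f v ![x, x] := by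
  have hmat : (fun i j => iteratedFDeriv ℝ 2 f v ![Pi.single i 1, Pi.single j 1]
      : Matrix (Fin N) (Fin N) ℝ) = LinearMap.toMatrix₂' ℝ (bilinearIteratedFDerivTwo ℝ f v) := by
    ext i j
    rw [LinearMap.toMatrix₂'_apply, bilinearIteratedFDerivTwo_eq_iteratedFDeriv]
  rw [hmat, ← Matrix.toLinearMap₂'_apply', Matrix.toLinearMap₂'_toMatrix',
    bilinearIteratedFDerivTwo_eq_iteratedFDeriv]

theorem eventually_abs_eq_sign_mul {X : Type*} [TopologicalSpace X] {f : X → ℝ} {x : X}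
    (hf : ContinuousAt f x) (hx : f x ≠ 0) :
    ∀ᶠ u in 𝓝 x, |f u| = SignType.sign (f x) * f u := by
  rcases hx.lt_or_gt with hneg | hpos
  · filter_upwards [hf.eventually (eventually_lt_nhds hneg)] with u hu
    simp [sign_neg hneg, abs_of_neg hu]
  · filter_upwards [hf.eventually (eventually_gt_nhds hpos)] with u hu
    simp [sign_pos hpos, abs_of_pos hu]

theorem sign_mul_mul_sign_mul {d α β : ℝ} (h : d = 0 → α = 0) (f : ℝ → ℝ) :
    SignType.sign d * α * (SignType.sign d * β) * f (SignType.sign d * d) = α * β * f |d| := by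
  rcases eq_or_ne d 0 with rfl | hd
  · simp [h rfl]
  · rw [sign_mul_self]
    rcases hd.lt_or_gt with hneg | hpos
    · simp [sign_neg hneg]
    · simp [sign_pos hpos]

-- `psi a n s` is by definition `psiProfile a n |s|`.
noncomputable def psiProfile (a : ℝ) (n : ℕ) (t : ℝ) : ℝ := a * ((t - 1) ^ (2 * n) - 1)

theorem contDiff_psiProfile (a : ℝ) (n : ℕ) : ContDiff ℝ 2 (psiProfile a n) := by
  unfold psiProfile
  fun_prop

theorem iteratedDeriv_two_psiProfile (a : ℝ) (n : ℕ) (t : ℝ) :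
    iteratedDeriv 2 (psiProfile a n) t = a * ((2 * n).descFactorial 2 * (t - 1) ^ (2 * n - 2)) := by
  have hshift : iteratedDeriv 2 (psiProfile a n) t
      = iteratedDeriv 2 (fun s => a * (s ^ (2 * n) - 1)) (t - 1) :=
    congrFun (iteratedDeriv_comp_sub_const 2 (fun s : ℝ => a * (s ^ (2 * n) - 1)) 1) t
  rw [hshift, iteratedDeriv_const_mul_field, iteratedDeriv_fun_sub (by fun_prop) (by fun_prop)]
  simp [iteratedDeriv_const]

theorem iteratedDeriv_two_psiProfile_nonneg {a : ℝ} (ha : 0 ≤ a) (n : ℕ) (t : ℝ) :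
    0 ≤ iteratedDeriv 2 (psiProfile a n) t := by
  have heven : Even (2 * n - 2) := ⟨n - 1, by omega⟩
  have := heven.pow_nonneg (t - 1)
  rw [iteratedDeriv_two_psiProfile]
  positivity

theorem iteratedDeriv_two_psiProfile_pos {a : ℝ} (ha : 0 < a) {n : ℕ} (hn : 1 ≤ n) {t : ℝ}
    (ht : t ≠ 1) : 0 < iteratedDeriv 2 (psiProfile a n) t := by
  have heven : Even (2 * n - 2) := ⟨n - 1, by omega⟩
  have := heven.pow_pos (sub_ne_zero.2 ht)
  have : 0 < (2 * n).descFactorial 2 := Nat.descFactorial_pos.2 (by omega)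
  rw [iteratedDeriv_two_psiProfile]
  positivity

noncomputable def energyModel {N : ℕ} (g : ℝ → ℝ) (W : Matrix (Fin N) (Fin N) ℝ)
    (σ τ : Fin N → Fin N → ℝ) (u : Fin N → ℝ) : ℝ :=
  (1 / 2) * ∑ p, ∑ q, W p q * (g (σ p q * (u q - u p)) + g (τ p q * (u q + u p)))

theorem iteratedFDeriv_two_energyModel_apply {N : ℕ} {g : ℝ → ℝ} (hg : ContDiff ℝ 2 g)
    (W : Matrix (Fin N) (Fin N) ℝ) (σ τ : Fin N → Fin N → ℝ) (x y z : Fin N → ℝ) :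
    iteratedFDeriv ℝ 2 (energyModel g W σ τ) x ![y, z] = (1 / 2) * ∑ p, ∑ q, W p q *
      (σ p q * (y q - y p) * (σ p q * (z q - z p)) * iteratedDeriv 2 g (σ p q * (x q - x p))
        + τ p q * (y q + y p) * (τ p q * (z q + z p)) * iteratedDeriv 2 g (τ p q * (x q + x p)))
    := by
  let ℓdiff (p q : Fin N) : (Fin N → ℝ) →L[ℝ] ℝ :=
    σ p q • (ContinuousLinearMap.proj (R := ℝ) (φ := fun _ : Fin N => ℝ) q -
      ContinuousLinearMap.proj p)
  let ℓsum (p q : Fin N) : (Fin N → ℝ) →L[ℝ] ℝ :=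
    τ p q • (ContinuousLinearMap.proj (R := ℝ) (φ := fun _ : Fin N => ℝ) q +
      ContinuousLinearMap.proj p)
  have hmodel : energyModel g W σ τ = fun u => (1 / 2 : ℝ) • ∑ p, ∑ q,
      W p q • ((fun u => g (ℓdiff p q u)) u + (fun u => g (ℓsum p q u)) u) := rfl
  rw [hmodel, iteratedFDeriv_const_smul_apply' (by fun_prop),
    iteratedFDeriv_fun_sum_apply fun p _ => by fun_prop, smul_apply, sum_apply, smul_eq_mul]
  congr 1
  refine Finset.sum_congr rfl fun p _ => ?_
  rw [iteratedFDeriv_fun_sum_apply fun q _ => by fun_prop, sum_apply]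
  refine Finset.sum_congr rfl fun q _ => ?_
  rw [iteratedFDeriv_const_smul_apply' (by fun_prop), smul_apply,
    fun_iteratedFDeriv_add_apply (by fun_prop) (by fun_prop), add_apply,
    iteratedFDeriv_two_comp_clm_apply hg, iteratedFDeriv_two_comp_clm_apply hg]
  simp [ℓdiff, ℓsum, mul_add]

section Energy

variable {N : ℕ} (a : ℝ) (n : ℕ) (W : Matrix (Fin N) (Fin N) ℝ) {v : Fin N → ℝ}

theorem energy_eventuallyEq_energyModel (hinj : Function.Injective v)
    (hsum : ∀ p q, v q + v p ≠ 0) :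
    energy a n W =ᶠ[𝓝 v] energyModel (psiProfile a n) W
      (fun p q => SignType.sign (v q - v p)) (fun p q => SignType.sign (v q + v p)) := by
  have hdiff : ∀ p q, ∀ᶠ u in 𝓝 v,
      |u q - u p| = (SignType.sign (v q - v p) : ℝ) * (u q - u p) := by
    intro p q
    rcases eq_or_ne p q with rfl | hpq
    · exact .of_forall fun u => by simp
    · exact eventually_abs_eq_sign_mul (f := fun u : Fin N → ℝ => u q - u p) (by fun_prop)
        (sub_ne_zero.2 (hinj.ne hpq.symm))
  have hadd : ∀ p q, ∀ᶠ u in 𝓝 v,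
      |u q + u p| = (SignType.sign (v q + v p) : ℝ) * (u q + u p) :=
    fun p q => eventually_abs_eq_sign_mul (f := fun u : Fin N → ℝ => u q + u p) (by fun_prop)
      (hsum p q)
  filter_upwards [eventually_all.2 fun p => eventually_all.2 (hdiff p),
    eventually_all.2 fun p => eventually_all.2 (hadd p)] with u hdiff hadd
  simp only [energy, energyModel, psi, psiProfile, hdiff, hadd]

theorem iteratedFDeriv_two_energy_apply (hinj : Function.Injective v)
    (hsum : ∀ p q, v q + v p ≠ 0) (y z : Fin N → ℝ) :
    iteratedFDeriv ℝ 2 (energy a n W) v ![y, z] = (1 / 2) * ∑ p, ∑ q, W p q *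
      ((y q - y p) * (z q - z p) * iteratedDeriv 2 (psiProfile a n) |v q - v p|
        + (y q + y p) * (z q + z p) * iteratedDeriv 2 (psiProfile a n) |v q + v p|) := by
  rw [((energy_eventuallyEq_energyModel a n W hinj hsum).iteratedFDeriv ℝ 2).eq_of_nhds,
    iteratedFDeriv_two_energyModel_apply (contDiff_psiProfile a n)]
  congr 1
  refine Finset.sum_congr rfl fun p _ => Finset.sum_congr rfl fun q _ => ?_
  rw [sign_mul_mul_sign_mul (fun h => by rw [hinj (sub_eq_zero.1 h), sub_self]),
    sign_mul_mul_sign_mul (fun h => absurd h (hsum p q))]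

end Energy

theorem sum_mul_sub_sq_add_sq_pos {N : ℕ} {W c d : Fin N → Fin N → ℝ} (hW : ∀ p q, 0 ≤ W p q)
    (hc : ∀ p q, 0 ≤ c p q) (hd : ∀ p q, 0 ≤ d p q)
    (hpos : ∀ i, (0 < W i i ∧ 0 < d i i) ∨ ∃ j, 0 < W i j ∧ 0 < c i j ∧ 0 < d i j)
    {x : Fin N → ℝ} (hx : x ≠ 0) :
    0 < ∑ p, ∑ q, W p q * (c p q * (x q - x p) ^ 2 + d p q * (x q + x p) ^ 2) := by
  have hterm : ∀ p q, 0 ≤ W p q * (c p q * (x q - x p) ^ 2 + d p q * (x q + x p) ^ 2) :=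
    fun p q => mul_nonneg (hW p q) (add_nonneg (mul_nonneg (hc p q) (sq_nonneg _))
      (mul_nonneg (hd p q) (sq_nonneg _)))
  obtain ⟨i, hi⟩ : ∃ i, x i ≠ 0 := Function.ne_iff.1 hx
  refine Finset.sum_pos' (fun p _ => Finset.sum_nonneg fun q _ => hterm p q)
    ⟨i, Finset.mem_univ i, Finset.sum_pos' (fun q _ => hterm i q) ?_⟩
  rcases hpos i with ⟨hWii, hdii⟩ | ⟨j, hWij, hcij, hdij⟩
  · refine ⟨i, Finset.mem_univ i, mul_pos hWii ?_⟩
    rw [sub_self, ← two_mul]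
    exact add_pos_of_nonneg_of_pos (mul_nonneg (hc i i) (sq_nonneg _))
      (mul_pos hdii (sq_pos_of_ne_zero (mul_ne_zero two_ne_zero hi)))
  · refine ⟨j, Finset.mem_univ j, mul_pos hWij ?_⟩
    rcases eq_or_ne (x j - x i) 0 with h | h
    · have h' : x j + x i ≠ 0 := fun h' => hi (by linarith)
      exact add_pos_of_nonneg_of_pos (mul_nonneg hcij.le (sq_nonneg _))
        (mul_pos hdij (sq_pos_of_ne_zero h'))
    · exact add_pos_of_pos_of_nonneg (mul_pos hcij (sq_pos_of_ne_zero h))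
        (mul_nonneg hdij.le (sq_nonneg _))

theorem hessianE_posDef {N : ℕ} {a : ℝ} (ha : 0 < a) {n : ℕ} (hn : 1 ≤ n)
    {W : Matrix (Fin N) (Fin N) ℝ} (hW : ∀ i j, 0 ≤ W i j) (hdiag : ∀ i, 0 < W i i)
    {v : Fin N → ℝ} (hv : ∀ i, v i ∈ Set.Ioo (0 : ℝ) 1) (hinj : Function.Injective v)
    (hcond : ∀ i, v i ≠ 1 / 2 ∨ ∃ j, v j ≠ 1 - v i ∧ 0 < W i j) :
    (hessianE a n W v).PosDef := by
  have hH := iteratedFDeriv_two_energy_apply a n W hinj fun p q => (add_pos (hv q).1 (hv p).1).ne'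
  have hpos : ∀ i, (0 < W i i ∧ 0 < iteratedDeriv 2 (psiProfile a n) |v i + v i|) ∨
      ∃ j, 0 < W i j ∧ 0 < iteratedDeriv 2 (psiProfile a n) |v j - v i|
        ∧ 0 < iteratedDeriv 2 (psiProfile a n) |v j + v i| := by
    intro i
    obtain ⟨hi0, hi1⟩ := hv i
    rcases hcond i with hhalf | ⟨j, hj, hWij⟩
    · refine .inl ⟨hdiag i, iteratedDeriv_two_psiProfile_pos ha hn ?_⟩
      rw [abs_of_pos (by linarith)]
      contrapose! hhalf
      linarith
    · obtain ⟨hj0, hj1⟩ := hv j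
      refine .inr ⟨j, hWij, iteratedDeriv_two_psiProfile_pos ha hn ?_,
        iteratedDeriv_two_psiProfile_pos ha hn ?_⟩
      · exact (abs_sub_lt_iff.2 ⟨by linarith, by linarith⟩).ne
      · rw [abs_of_pos (by linarith)]
        contrapose! hj
        linarith
  unfold hessianE
  refine Matrix.PosDef.of_dotProduct_mulVec_pos (Matrix.IsHermitian.ext fun i j => ?_)
    fun x hx => ?_
  · rw [star_trivial, hH, hH]
    congr 1
    exact Finset.sum_congr rfl fun p _ => Finset.sum_congr rfl fun q _ => by ring
  · rw [star_trivial, dotProduct_mulVec_iteratedFDeriv_two, hH]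
    refine mul_pos one_half_pos ((sum_mul_sub_sq_add_sq_pos hW
      (c := fun p q => iteratedDeriv 2 (psiProfile a n) |v q - v p|)
      (d := fun p q => iteratedDeriv 2 (psiProfile a n) |v q + v p|)
      (fun _ _ => iteratedDeriv_two_psiProfile_nonneg ha.le n _)
      (fun _ _ => iteratedDeriv_two_psiProfile_nonneg ha.le n _) hpos hx).trans_eq ?_)
    exact Finset.sum_congr rfl fun p _ => Finset.sum_congr rfl fun q _ => by ring

/-- For `a > 0`, `n = 2`, a nonnegative weight matrix with positive diagonal,
and `v ∈ (0,1)^N` with pairwise distinct entries such that for every `i` either `v i ≠ 1/2` or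
there is `j ≠ i` with `v j ≠ v i`, `v j ≠ 1 − v i` and `W i j > 0`, the Hessian of the energy
at `v` is positive definite. -/
theorem stmt7 (a : ℝ) (ha : 0 < a) (N : ℕ)
    (W : Matrix (Fin N) (Fin N) ℝ) (hW : ∀ i j, 0 ≤ W i j) (hdiag : ∀ i, 0 < W i i)
    (v : Fin N → ℝ) (hv : ∀ i, v i ∈ Set.Ioo (0 : ℝ) 1)
    (hdist : ∀ i j, i ≠ j → v i ≠ v j)
    (hcond : ∀ i, v i ≠ 1 / 2 ∨
      ∃ j, j ≠ i ∧ v j ≠ v i ∧ v j ≠ 1 - v i ∧ 0 < W i j) :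
    (hessianE a 2 W v).PosDef :=
  hessianE_posDef ha one_le_two hW hdiag hv (fun i j h => by_contra fun hne => hdist i j hne h)
    fun i => (hcond i).imp_right fun ⟨j, _, _, hj, hWij⟩ => ⟨j, hj, hWij⟩
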